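/- Let 𝒯 = (T₁,…,Tₙ) be an (r,ε)-invariant tile set in which every tile has size at least r, and let Q be a 𝒯-quasi-tiling shift. Let Q_p be the shift of all quasi-tilings obtained from elements of Q by deleting some (possibly no) tile-translates. Then h(Q_p) ≤ h(Q) + (2/r)·log(3r). -/

import Mathlib

open Pointwise Filter

/-- Projections of `X ⊆ A^G` to a finite set. -/
def proj {G A : Type*} (X : Set (G → A)) (K : Finset G) : Set (K → A) :=
  {f | ∃ x ∈ X, ∀ k : K, f k = x k}

/-- Disjoint quasi-tilings for a tile set. -/
def IsQT {G : Type*} [Group G] (𝒯 : Finset (Finset G)) (T : G → Finset G) : Prop :=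
  (∀ g, T g ∈ 𝒯 ∨ T g = ∅) ∧
  ∀ g h : G, g ≠ h → Disjoint (g • ((T g : Finset G) : Set G)) (h • ((T h : Finset G) : Set G))

/-- The word-metric ball of radius `r`. -/
def ball {G : Type*} [Group G] [DecidableEq G] (gen : Finset G) (r : ℕ) : Finset G :=
  (insert (1 : G) (gen ∪ gen⁻¹)) ^ r

/-- The `r`-boundary of a set `F ⊆ G`. -/
def bdry {G : Type*} [Group G] [DecidableEq G] (gen : Finset G) (r : ℕ) (F : Set G) : Set G :=
  {g | (∃ b ∈ ball gen r, g * b ∈ F) ∧ (∃ b ∈ ball gen r, g * b ∉ F)}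

/-- The `r`-boundary ratio. -/
noncomputable def rho {G : Type*} [Group G] [DecidableEq G]
    (gen : Finset G) (r : ℕ) (F : Finset G) : ℝ :=
  ((bdry gen r (F : Set G)).ncard : ℝ) / F.card

/-- `Q_p`: quasi-tilings obtained from elements of `Q` by deleting some tile-translates. -/
def Qp {G : Type*} (Q : Set (G → Finset G)) : Set (G → Finset G) :=
  {T' | ∃ T ∈ Q, ∀ g, T' g = T g ∨ T' g = ∅}

/-!
Deleting tiles from a quasi-tiling `T ∈ Q` changes its pattern on `F` only at the centres in `F`
of the tiles of `T`. Those tiles are disjoint, have at least `r` elements and lie in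
`F * ball gen R` once every tile lies in `ball gen R`; since `|F * ball gen R| ≤ |F| + |∂_R F|`,
there are at most `(1 + ρ_R(F)) |F| / r` such centres. Hence every pattern of `Q` on `F` gives rise
to at most `2 ^ ((1 + ρ_R(F)) |F| / r)` patterns of `Q_p`, and along the Følner sequence
`h(Q_p) ≤ h(Q) + log 2 / r ≤ h(Q) + (2 / r) log (3r)`.
-/

section Ball

variable {G : Type*} [Group G] [DecidableEq G] (gen : Finset G)

lemma one_mem_ball (r : ℕ) : (1 : G) ∈ ball gen r :=
  Finset.one_mem_pow (Finset.mem_insert_self _ _)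

lemma ball_mono {m n : ℕ} (h : m ≤ n) : ball gen m ⊆ ball gen n :=
  Finset.pow_subset_pow_right (Finset.mem_insert_self _ _) h

lemma inv_ball_eq_self (r : ℕ) : (ball gen r)⁻¹ = ball gen r := by
  have hsymm : (insert (1 : G) (gen ∪ gen⁻¹))⁻¹ = insert 1 (gen ∪ gen⁻¹) := by
    ext x
    simp only [Finset.mem_inv', Finset.mem_insert, Finset.mem_union, inv_eq_one, inv_inv]
    tauto
  rw [ball, ← inv_pow, hsymm]

lemma inv_mem_ball {g : G} {r : ℕ} (hg : g ∈ ball gen r) : g⁻¹ ∈ ball gen r :=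
  inv_ball_eq_self gen r ▸ Finset.inv_mem_inv hg

lemma exists_mem_ball (hgen : Subgroup.closure (gen : Set G) = ⊤) (g : G) :
    ∃ n, g ∈ ball gen n := by
  induction hgen ▸ Subgroup.mem_top g using Subgroup.closure_induction with
  | mem x hx =>
    exact ⟨1, by simpa only [ball, pow_one] using
      Finset.mem_insert_of_mem (Finset.mem_union_left _ hx)⟩
  | one => exact ⟨0, one_mem_ball gen 0⟩
  | mul x y _ _ ihx ihy =>
    obtain ⟨n, hn⟩ := ihx
    obtain ⟨m, hm⟩ := ihy
    exact ⟨n + m, by simpa only [ball, pow_add] using Finset.mul_mem_mul hn hm⟩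
  | inv x _ ih =>
    obtain ⟨n, hn⟩ := ih
    exact ⟨n, inv_mem_ball gen hn⟩

lemma exists_subset_ball (hgen : Subgroup.closure (gen : Set G) = ⊤) (B : Finset G) :
    ∃ R, B ⊆ ball gen R := by
  induction B using Finset.induction with
  | empty => exact ⟨0, Finset.empty_subset _⟩
  | insert a s _ ih =>
    obtain ⟨R, hR⟩ := ih
    obtain ⟨n, hn⟩ := exists_mem_ball gen hgen a
    exact ⟨max n R, Finset.insert_subset (ball_mono gen (le_max_left _ _) hn)
      (hR.trans (ball_mono gen (le_max_right _ _)))⟩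

lemma bdry_subset_mul_ball (R : ℕ) (F : Finset G) :
    bdry gen R (F : Set G) ⊆ ↑(F * ball gen R) := by
  rintro g ⟨⟨b, hb, hgb⟩, -⟩
  rw [Finset.mem_coe]
  simpa using Finset.mul_mem_mul (Finset.mem_coe.mp hgb) (inv_mem_ball gen hb)

lemma card_mul_ball_le (R : ℕ) (F : Finset G) :
    (F * ball gen R).card ≤ F.card + (bdry gen R (F : Set G)).ncard := by
  have hsdiff : (↑((F * ball gen R) \ F) : Set G) ⊆ bdry gen R (F : Set G) := by
    intro x hx
    obtain ⟨hxB, hxF⟩ := Finset.mem_sdiff.mp hx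
    obtain ⟨f, hf, b, hb, rfl⟩ := Finset.mem_mul.mp hxB
    exact ⟨⟨b⁻¹, inv_mem_ball gen hb, by simpa using hf⟩,
      ⟨1, one_mem_ball gen R, by simpa using hxF⟩⟩
  have hfin := (Finset.finite_toSet _).subset (bdry_subset_mul_ball gen R F)
  calc (F * ball gen R).card ≤ ((F * ball gen R) \ F).card + F.card :=
        Finset.card_le_card_sdiff_add_card
    _ ≤ (bdry gen R (F : Set G)).ncard + F.card := by
        gcongr
        rw [← Set.ncard_coe_finset]
        exact Set.ncard_le_ncard hsdiff hfin
    _ = F.card + (bdry gen R (F : Set G)).ncard := add_comm _ _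

end Ball

def eraseAt {K G : Type*} [DecidableEq K] (f : K → Finset G) (S : Finset K) : K → Finset G :=
  fun k => if k ∈ S then ∅ else f k

section Patterns

variable {G : Type*} [DecidableEq G]

def tileCenters (T : G → Finset G) (F : Finset G) : Finset G :=
  F.filter fun g => T g ≠ ∅

lemma proj_finite (𝒯 : Finset (Finset G)) (X : Set (G → Finset G))
    (hX : ∀ x ∈ X, ∀ g, x g ∈ 𝒯 ∨ x g = ∅) (K : Finset G) : (proj X K).Finite := by
  refine (Set.Finite.pi (t := fun _ : K => ((insert ∅ 𝒯 : Finset (Finset G)) : Set (Finset G)))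
    fun _ => Finset.finite_toSet _).subset ?_
  rintro f ⟨x, hx, hf⟩ k -
  rcases hX x hx k with h | h <;> simp [hf k, h]

lemma ncard_proj_Qp_le (Q : Set (G → Finset G)) (F : Finset G) (hfin : (proj Q F).Finite)
    (m : ℕ) (hm : ∀ T ∈ Q, (tileCenters T F).card ≤ m) :
    (proj (Qp Q) F).ncard ≤ (proj Q F).ncard * 2 ^ m := by
  let support (f : F → Finset G) : Finset F := Finset.univ.filter fun k => f k ≠ ∅
  let erasures (f : F → Finset G) : Finset (F → Finset G) := (support f).powerset.image (eraseAt f)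
  have hcover : proj (Qp Q) F ⊆ ↑(hfin.toFinset.biUnion erasures) := by
    rintro f' ⟨x, ⟨T, hTQ, hxT⟩, hf'⟩
    simp only [Finset.coe_biUnion, Set.mem_iUnion, Finset.mem_coe, Set.Finite.mem_toFinset]
    refine ⟨fun k => T k, ⟨T, hTQ, fun _ => rfl⟩, Finset.mem_image.mpr
      ⟨(support fun k => T k).filter fun k => f' k = ∅, Finset.mem_powerset.mpr
        (Finset.filter_subset _ _), funext fun k => ?_⟩⟩
    rcases hxT k with h | h <;> by_cases hk : T k = ∅ <;> simp_all [eraseAt, support]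
  have hsupport : ∀ f ∈ hfin.toFinset, (support f).card ≤ m := by
    intro f hf
    obtain ⟨T, hTQ, hfT⟩ := hfin.mem_toFinset.mp hf
    refine le_trans (Finset.card_le_card_of_injOn Subtype.val ?_ Subtype.val_injective.injOn)
      (hm T hTQ)
    intro k hk
    simp_all [support, tileCenters]
  calc (proj (Qp Q) F).ncard ≤ (hfin.toFinset.biUnion erasures).card := by
        rw [← Set.ncard_coe_finset]
        exact Set.ncard_le_ncard hcover (Finset.finite_toSet _)
    _ ≤ hfin.toFinset.card * 2 ^ m := by
        refine Finset.card_biUnion_le_card_mul _ _ _ fun f hf => ?_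
        calc (erasures f).card ≤ 2 ^ (support f).card :=
              Finset.card_image_le.trans (Finset.card_powerset _).le
          _ ≤ 2 ^ m := Nat.pow_le_pow_right two_pos (hsupport f hf)
    _ = (proj Q F).ncard * 2 ^ m := by rw [Set.ncard_eq_toFinset_card _ hfin]

end Patterns

lemma IsQT.mul_card_tileCenters_le {G : Type*} [Group G] [DecidableEq G]
    {𝒯 : Finset (Finset G)} {r : ℕ} (hsize : ∀ t ∈ 𝒯, r ≤ t.card) {T : G → Finset G}
    (hT : IsQT 𝒯 T) (F B : Finset G) (hB : ∀ t ∈ 𝒯, t ⊆ B) :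
    r * (tileCenters T F).card ≤ (F * B).card := by
  have hmem : ∀ g ∈ tileCenters T F, g ∈ F ∧ T g ∈ 𝒯 := fun g hg =>
    have hg := Finset.mem_filter.mp hg
    ⟨hg.1, (hT.1 g).resolve_right hg.2⟩
  have hdisj : (tileCenters T F : Set G).PairwiseDisjoint fun g => g • T g :=
    fun g _ h _ hgh => by simpa [← Finset.disjoint_coe] using hT.2 g h hgh
  have hcover : (tileCenters T F).biUnion (fun g => g • T g) ⊆ F * B := by
    intro x hx
    obtain ⟨g, hg, b, hb, rfl⟩ := by
      simpa only [Finset.mem_biUnion, Finset.mem_smul_finset] using hx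
    exact Finset.mul_mem_mul (hmem g hg).1 (hB _ (hmem g hg).2 hb)
  calc r * (tileCenters T F).card = ∑ _g ∈ tileCenters T F, r := by
        rw [Finset.sum_const, smul_eq_mul, mul_comm]
    _ ≤ ∑ g ∈ tileCenters T F, (g • T g).card := Finset.sum_le_sum fun g hg => by
        rw [Finset.card_smul_finset]
        exact hsize _ (hmem g hg).2
    _ = ((tileCenters T F).biUnion fun g => g • T g).card := (Finset.card_biUnion hdisj).symm
    _ ≤ (F * B).card := Finset.card_le_card hcover

lemma Real.log_natCast_le_add_mul_log {a b k m : ℕ} (h : a ≤ b * k ^ m) :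
    Real.log a ≤ Real.log b + m * Real.log k := by
  rcases Nat.eq_zero_or_pos a with rfl | ha
  · have := Real.log_natCast_nonneg b
    have := Real.log_natCast_nonneg k
    simp only [Nat.cast_zero, Real.log_zero]
    positivity
  · obtain ⟨hb, hk⟩ := mul_ne_zero_iff.mp (ha.trans_le h).ne'
    replace hb : (b : ℝ) ≠ 0 := by exact_mod_cast hb
    replace hk : (k : ℝ) ^ m ≠ 0 := by exact_mod_cast hk
    calc Real.log a ≤ Real.log ((b : ℝ) * k ^ m) :=
          Real.log_le_log (by exact_mod_cast ha) (by exact_mod_cast h)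
      _ = Real.log b + m * Real.log k := by rw [Real.log_mul hb hk, Real.log_pow]

lemma log_ncard_proj_Qp_div_le {G : Type*} [Group G] [DecidableEq G] (gen : Finset G)
    {𝒯 : Finset (Finset G)} {r R : ℕ} (hr : 0 < r) (hsize : ∀ t ∈ 𝒯, r ≤ t.card)
    (hR : ∀ t ∈ 𝒯, t ⊆ ball gen R) {Q : Set (G → Finset G)} (hQT : ∀ T ∈ Q, IsQT 𝒯 T)
    {F : Finset G} (hF : F.Nonempty) :
    Real.log (proj (Qp Q) F).ncard / F.card ≤
      Real.log (proj Q F).ncard / F.card + (1 + rho gen R F) / r * Real.log 2 := by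
  set m := (F * ball gen R).card / r
  have hcenters : ∀ T ∈ Q, (tileCenters T F).card ≤ m := fun T hT =>
    (Nat.le_div_iff_mul_le hr).mpr <|
      mul_comm r _ ▸ (hQT T hT).mul_card_tileCenters_le hsize F _ hR
  have hcount := ncard_proj_Qp_le Q F (proj_finite 𝒯 Q (fun T hT => (hQT T hT).1) F) m hcenters
  have hm : (m : ℝ) ≤ (1 + rho gen R F) / r * F.card := by
    calc (m : ℝ) ≤ (F * ball gen R).card / r := Nat.cast_div_le
      _ ≤ (F.card + (bdry gen R (F : Set G)).ncard) / r := by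
          gcongr
          exact_mod_cast card_mul_ball_le gen R F
      _ = (1 + rho gen R F) / r * F.card := by
          rw [rho]
          field_simp
  calc Real.log (proj (Qp Q) F).ncard / F.card
      ≤ (Real.log (proj Q F).ncard + m * Real.log 2) / F.card := by
        gcongr
        exact_mod_cast Real.log_natCast_le_add_mul_log (k := 2) hcount
    _ ≤ (Real.log (proj Q F).ncard + (1 + rho gen R F) / r * F.card * Real.log 2) / F.card := by
        gcongr
    _ = Real.log (proj Q F).ncard / F.card + (1 + rho gen R F) / r * Real.log 2 := by
        field_simp

theorem stmt_14_general {G : Type*} [Group G] [DecidableEq G]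
    (gen : Finset G) (hgen : Subgroup.closure (gen : Set G) = ⊤)
    (𝒯 : Finset (Finset G))
    (r : ℕ) (hr : 0 < r)
    (hsize : ∀ t ∈ 𝒯, r ≤ t.card)
    (Q : Set (G → Finset G)) (hQT : ∀ T ∈ Q, IsQT 𝒯 T)
    (Fn : ℕ → Finset G) (hFne : ∀ n, (Fn n).Nonempty)
    (hFol : ∀ R : ℕ, Tendsto (fun n => rho gen R (Fn n)) atTop (nhds 0))
    (hq hqp : ℝ)
    (hqlim : Tendsto (fun n => Real.log ((proj Q (Fn n)).ncard) / (Fn n).card)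
      atTop (nhds hq))
    (hqplim : Tendsto (fun n => Real.log ((proj (Qp Q) (Fn n)).ncard) / (Fn n).card)
      atTop (nhds hqp)) :
    hqp ≤ hq + (2 / r) * Real.log (3 * r) := by
  obtain ⟨R, hR⟩ := exists_subset_ball gen hgen (𝒯.sup id)
  have hbound n := log_ncard_proj_Qp_div_le gen hr hsize
    (fun t ht => (Finset.le_sup (f := id) ht).trans hR) hQT (hFne n)
  have hlim := hqlim.add (((tendsto_const_nhds (x := (1 : ℝ))).add (hFol R)).div_const
    (r : ℝ) |>.mul_const (Real.log 2))
  have hr1 : (1 : ℝ) ≤ r := by exact_mod_cast hr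
  have hlog : Real.log 2 ≤ 2 * Real.log (3 * r) := by
    have h2 : Real.log 2 ≤ Real.log (3 * r) := Real.log_le_log two_pos (by linarith)
    linarith [Real.log_nonneg (by linarith : (1 : ℝ) ≤ 3 * r)]
  calc hqp ≤ hq + (1 + 0) / r * Real.log 2 := le_of_tendsto_of_tendsto' hqplim hlim hbound
    _ = hq + Real.log 2 / r := by ring
    _ ≤ hq + 2 * Real.log (3 * r) / r := by gcongr
    _ = hq + (2 / r) * Real.log (3 * r) := by ring

/-- if `𝒯` is `(r,ε)`-invariant (so each tile has size at least `r`) and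
`Q` is a `𝒯`-quasi-tiling shift, then `h(Q_p) ≤ h(Q) + (2/r) log(3r)`. -/
theorem stmt_14 {G : Type*} [Group G] [DecidableEq G]
    (gen : Finset G) (hgen : Subgroup.closure (gen : Set G) = ⊤)
    (𝒯 : Finset (Finset G)) (h1 : ∀ t ∈ 𝒯, (1 : G) ∈ t)
    (r : ℕ) (hr : 0 < r) (ε : ℝ)
    (hinv : ∀ t ∈ 𝒯, ((bdry gen r (t : Set G)).ncard : ℝ) ≤ ε * t.card)
    (hsize : ∀ t ∈ 𝒯, r ≤ t.card)
    (Q : Set (G → Finset G)) (hQT : ∀ T ∈ Q, IsQT 𝒯 T)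
    (hQinv : ∀ (g : G), ∀ T ∈ Q, (fun h => T (g⁻¹ * h)) ∈ Q)
    (hQcl : @IsClosed (G → Finset G)
      (@Pi.topologicalSpace G (fun _ => Finset G) (fun _ => ⊥)) Q)
    (Fn : ℕ → Finset G) (hFne : ∀ n, (Fn n).Nonempty)
    (hFol : ∀ R : ℕ, Tendsto (fun n => rho gen R (Fn n)) atTop (nhds 0))
    (hq hqp : ℝ)
    (hqlim : Tendsto (fun n => Real.log ((proj Q (Fn n)).ncard) / (Fn n).card)
      atTop (nhds hq))
    (hqplim : Tendsto (fun n => Real.log ((proj (Qp Q) (Fn n)).ncard) / (Fn n).card)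
      atTop (nhds hqp)) :
    hqp ≤ hq + (2 / r) * Real.log (3 * r) :=
  stmt_14_general gen hgen 𝒯 r hr hsize Q hQT Fn hFne hFol hq hqp hqlim hqplim
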